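/- arXiv:1505.04019 — 2 statements merged into one kernel-verified Lean document; each statement's English description precedes it below -/
import Mathlib

section
/- For any superbubble ⟨s, t⟩ in a directed acyclic graph G with a single source and single sink, there exists a child c of s (i.e., an edge (s, c) ∈ E) such that c has exactly one parent, namely s. -/
/-! The vertices of the bubble other than `s` form a nonempty (it contains `t`) finite set on
which the edge relation is acyclic, so one of them, `m`, has no parent inside it. By the matching
condition every parent of such a vertex lies in the bubble, so every parent of `m` is `s`; and
`m`, being reachable from `s`, has a parent. -/

/-- `v` is reachable from `s` by a directed path whose internal vertices
(all vertices except the endpoints) avoid `avoid`. -/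
def ReachWithout {V : Type*} (E : V → V → Prop) (avoid s v : V) : Prop :=
  s = v ∨ ∃ w, Relation.ReflTransGen (fun a b => E a b ∧ b ≠ avoid) s w ∧ E w v

/-- `t` is reachable from `v` by a directed path whose internal vertices avoid `avoid`. -/
def CoReachWithout {V : Type*} (E : V → V → Prop) (avoid v t : V) : Prop :=
  v = t ∨ ∃ w, E v w ∧ Relation.ReflTransGen (fun a b => E a b ∧ a ≠ avoid) w t

/-- The subgraph induced by `U` is acyclic. -/
def AcyclicOn {V : Type*} (E : V → V → Prop) (U : Set V) : Prop :=
  ∀ v, ¬ Relation.TransGen (fun a b => E a b ∧ a ∈ U ∧ b ∈ U) v v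

/-- The directed graph is acyclic. -/
def Acyclic {V : Type*} (E : V → V → Prop) : Prop :=
  ∀ v, ¬ Relation.TransGen E v v

/-- The reachability, matching and acyclicity conditions of a superbubble
(Definition 1, without minimality). -/
def SBCore {V : Type*} (E : V → V → Prop) (s t : V) : Prop :=
  s ≠ t ∧ Relation.TransGen E s t ∧
  (∀ v, ReachWithout E t s v ↔ CoReachWithout E s v t) ∧
  AcyclicOn E {v | ReachWithout E t s v}

/-- `⟨s, t⟩` is a superbubble: reachability, matching, acyclicity and minimality. -/
def Superbubble {V : Type*} (E : V → V → Prop) (s t : V) : Prop :=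
  SBCore E s t ∧ ∀ t', ReachWithout E t s t' → t' ≠ t → ¬ SBCore E s t'

open Relation

section

variable {V : Type*} {E : V → V → Prop}

theorem reflTransGen_avoiding_or_reachWithout_self {s v x : V} (h : ReflTransGen E s v) :
    ReflTransGen (fun a b => E a b ∧ b ≠ x) s v ∨ ReachWithout E x s x := by
  induction h with
  | refl => exact .inl .refl
  | @tail b c _ hbc ih =>
    rcases ih with hsb | hx
    · by_cases hcx : c = x
      · exact .inr (.inr ⟨b, hsb, hcx ▸ hbc⟩)
      · exact .inl (hsb.tail ⟨hbc, hcx⟩)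
    · exact .inr hx

/-- A path from `s` to `x` can be cut at its first visit to `x`. -/
theorem reachWithout_self_of_reflTransGen {s x : V} (h : ReflTransGen E s x) :
    ReachWithout E x s x := by
  refine (reflTransGen_avoiding_or_reachWithout_self h).elim (fun hsx => ?_) id
  rcases hsx.cases_tail with rfl | ⟨_, _, _, hxx⟩
  · exact .inl rfl
  · exact absurd rfl hxx

theorem CoReachWithout.of_edge {avoid u v t : V} (hv : CoReachWithout E avoid v t)
    (hva : v ≠ avoid) (huv : E u v) : CoReachWithout E avoid u t := by
  rcases hv with rfl | ⟨w, hvw, hwt⟩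
  · exact .inr ⟨v, huv, .refl⟩
  · exact .inr ⟨v, huv, .head ⟨hvw, hva⟩ hwt⟩

theorem reachWithout_of_edge_of_matching {s t u v : V}
    (hmatch : ∀ v, ReachWithout E t s v ↔ CoReachWithout E s v t)
    (hv : ReachWithout E t s v) (hvs : v ≠ s) (huv : E u v) : ReachWithout E t s u :=
  (hmatch u).mpr (((hmatch v).mp hv).of_edge hvs huv)

theorem AcyclicOn.mono {U W : Set V} (hU : AcyclicOn E U) (hWU : W ⊆ U) : AcyclicOn E W :=
  fun v hv => hU v (TransGen.mono (fun _ _ h => ⟨h.1, hWU h.2.1, hWU h.2.2⟩) v v hv)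

theorem AcyclicOn.exists_forall_not_edge [Finite V] {W : Set V} (hW : AcyclicOn E W)
    (hne : W.Nonempty) : ∃ m ∈ W, ∀ u ∈ W, ¬ E u m := by
  set R : V → V → Prop := fun a b => E a b ∧ a ∈ W ∧ b ∈ W
  have : IsTrans V (TransGen R) := ⟨fun _ _ _ => TransGen.trans⟩
  have : Std.Irrefl (TransGen R) := ⟨hW⟩
  have hwf : WellFounded R :=
    Subrelation.wf TransGen.single (Finite.wellFounded_of_trans_of_irrefl (TransGen R))
  obtain ⟨m, hmW, hmin⟩ := hwf.has_min W hne
  exact ⟨m, hmW, fun u huW hum => hmin u huW ⟨hum, huW, hmW⟩⟩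

end

theorem entrance_has_child_with_unique_parent_general {V : Type*} [Fintype V] (E : V → V → Prop)
    (s t : V) (hSB : Superbubble E s t) :
    ∃ c, E s c ∧ ∀ u, E u c → u = s := by
  obtain ⟨⟨hst, hreach, hmatch, hacyc⟩, -⟩ := hSB
  have htW : t ∈ {v | ReachWithout E t s v} \ {s} :=
    ⟨reachWithout_self_of_reflTransGen hreach.to_reflTransGen, Ne.symm hst⟩
  obtain ⟨m, ⟨hmU, hms⟩, hmin⟩ :=
    (hacyc.mono Set.sdiff_subset).exists_forall_not_edge ⟨t, htW⟩
  have hparents : ∀ u, E u m → u = s := fun u hum => by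
    by_contra hus
    exact hmin u ⟨reachWithout_of_edge_of_matching hmatch hmU hms hum, hus⟩ hum
  obtain ⟨w, -, hwm⟩ := hmU.resolve_left (Ne.symm hms)
  exact ⟨m, hparents w hwm ▸ hwm, hparents⟩

/-- For any superbubble ⟨s, t⟩ in a DAG with a single source and single sink,
there is a child c of s whose only parent is s. -/
theorem entrance_has_child_with_unique_parent {V : Type*} [Fintype V] (E : V → V → Prop)
    (hA : Acyclic E)
    (hSource : ∃! r : V, ∀ u, ¬ E u r)
    (hSink : ∃! q : V, ∀ u, ¬ E q u)
    (s t : V) (hSB : Superbubble E s t) :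
    ∃ c, E s c ∧ ∀ u, E u c → u = s :=
  entrance_has_child_with_unique_parent_general E s t hSB
end

section
/- Let G be a DAG with single source and single sink, and suppose ⟨s, e⟩ and ⟨s, e'⟩ are both superbubbles (without the minimality condition) with ordD[s] < ordD[e'] < ordD[e] for a DFS topological ordering ordD whose vertex-interval property holds (the vertices of any superbubble occupy exactly the ordD-interval between entrance and exit). Then ⟨e', e⟩ also satisfies the reachability, matching, and acyclicity conditions of a superbubble. -/
/-! The vertex set of `⟨e', e⟩` is the `ordD`-interval `[e', e]`. Because `[s, e]` is the vertex
set of `⟨s, e⟩`, edges leaving `[s, e)` land in `[s, e]` and edges entering `(s, e]` start in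
`[s, e]`; likewise for `[s, e']`. Hence no edge enters `(e', e]` from below `e'` (it would start
in `[s, e')` and jump past `e'`), and every path from `s` to a vertex beyond `e'` passes through
`e'`. So `[e', e]` is closed in both directions and contains everything reachable from `e'`
avoiding `e` and everything co-reaching `e` avoiding `e'`; conversely, the paths witnessing
`⟨s, e⟩` put every vertex of `[e', e]` into both sets. -/

open Relation Function

section Reachability

variable {V : Type*} {E : V → V → Prop} {s t a b v : V}

theorem ReachWithout.tail_of_ne (h : ReachWithout E t s a) (ha : a ≠ t) (hab : E a b) :
    ReachWithout E t s b := by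
  rcases h with rfl | ⟨w, hw, hwa⟩
  · exact Or.inr ⟨_, .refl, hab⟩
  · exact Or.inr ⟨a, hw.tail ⟨hwa, ha⟩, hab⟩

theorem CoReachWithout.head_of_ne (h : CoReachWithout E s b t) (hb : b ≠ s) (hab : E a b) :
    CoReachWithout E s a t := by
  rcases h with rfl | ⟨w, hbw, hw⟩
  · exact Or.inr ⟨b, hab, .refl⟩
  · exact Or.inr ⟨b, hab, .head ⟨hbw, hb⟩ hw⟩

theorem CoReachWithout.reflTransGen (h : CoReachWithout E s v t) : ReflTransGen E v t := by
  rcases h with rfl | ⟨w, hvw, hw⟩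
  · rfl
  · exact .head hvw (ReflTransGen.mono (fun _ _ h => h.1) _ _ hw)

end Reachability

section TopologicalOrder

variable {V : Type*} {E : V → V → Prop} {ord : V → ℕ} {s t u a b v : V}

def OutClosedOn (E : V → V → Prop) (ord : V → ℕ) (s t : V) : Prop :=
  ∀ a b, ord s ≤ ord a → ord a < ord t → E a b → ord b ≤ ord t

def InClosedOn (E : V → V → Prop) (ord : V → ℕ) (s t : V) : Prop :=
  ∀ a b, ord s < ord b → ord b ≤ ord t → E a b → ord s ≤ ord a

theorem ord_lt_of_transGen (htopo : ∀ a b, E a b → ord a < ord b) (h : TransGen E a b) :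
    ord a < ord b := by
  induction h with
  | single hab => exact htopo _ _ hab
  | tail _ hbc ih => exact ih.trans (htopo _ _ hbc)

theorem ord_le_of_reflTransGen (htopo : ∀ a b, E a b → ord a < ord b)
    (h : ReflTransGen E a b) : ord a ≤ ord b := by
  rcases reflTransGen_iff_eq_or_transGen.1 h with rfl | h
  · exact le_rfl
  · exact (ord_lt_of_transGen htopo h).le

theorem acyclicOn_of_ord (htopo : ∀ a b, E a b → ord a < ord b) (U : Set V) : AcyclicOn E U :=
  fun _ h => (ord_lt_of_transGen htopo (TransGen.mono (fun _ _ h => h.1) _ _ h)).false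

theorem reflTransGen_avoid_of_ord_lt (htopo : ∀ a b, E a b → ord a < ord b)
    (h : ReflTransGen E a b) (hu : ord u < ord a) :
    ReflTransGen (fun x y => E x y ∧ x ≠ u) a b := by
  induction h using ReflTransGen.head_induction_on with
  | refl => rfl
  | head hac _ ih => exact .head ⟨hac, ne_of_apply_ne ord hu.ne'⟩ (ih (hu.trans (htopo _ _ hac)))

theorem coReachWithout_of_reflTransGen (htopo : ∀ a b, E a b → ord a < ord b)
    (h : ReflTransGen E v t) (hu : ord u ≤ ord v) : CoReachWithout E u v t := by
  rcases h.cases_head with rfl | ⟨w, hvw, hw⟩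
  · exact Or.inl rfl
  · exact Or.inr ⟨w, hvw, reflTransGen_avoid_of_ord_lt htopo hw (hu.trans_lt (htopo _ _ hvw))⟩

theorem ReachWithout.ord_mem (htopo : ∀ a b, E a b → ord a < ord b) (hinj : Injective ord)
    (hout : OutClosedOn E ord s t) (hst : ord s < ord t) (h : ReachWithout E t s v) :
    ord s ≤ ord v ∧ ord v ≤ ord t := by
  have path : ∀ x, ReflTransGen (fun a b => E a b ∧ b ≠ t) s x →
      ord s ≤ ord x ∧ ord x < ord t := by
    intro x hx
    induction hx with
    | refl => exact ⟨le_rfl, hst⟩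
    | tail _ hxy ih =>
      exact ⟨ih.1.trans (htopo _ _ hxy.1).le,
        (hout _ _ ih.1 ih.2 hxy.1).lt_of_ne (hinj.ne hxy.2)⟩
  rcases h with rfl | ⟨w, hw, hwv⟩
  · exact ⟨le_rfl, hst.le⟩
  · obtain ⟨hsw, hwt⟩ := path w hw
    exact ⟨hsw.trans (htopo _ _ hwv).le, hout _ _ hsw hwt hwv⟩

theorem CoReachWithout.ord_mem (htopo : ∀ a b, E a b → ord a < ord b) (hinj : Injective ord)
    (hin : InClosedOn E ord s t) (hst : ord s < ord t) (h : CoReachWithout E s v t) :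
    ord s ≤ ord v ∧ ord v ≤ ord t := by
  have path : ∀ x, ReflTransGen (fun a b => E a b ∧ a ≠ s) x t →
      ord s < ord x ∧ ord x ≤ ord t := by
    intro x hx
    induction hx using ReflTransGen.head_induction_on with
    | refl => exact ⟨hst, le_rfl⟩
    | head hxy _ ih =>
      exact ⟨(hin _ _ ih.1 ih.2 hxy.1).lt_of_ne (hinj.ne hxy.2).symm,
        (htopo _ _ hxy.1).le.trans ih.2⟩
  rcases h with rfl | ⟨w, hvw, hw⟩
  · exact ⟨hst.le, le_rfl⟩
  · obtain ⟨hsw, hwt⟩ := path w hw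
    exact ⟨hin _ _ hsw hwt hvw, (htopo _ _ hvw).le.trans hwt⟩

theorem ReachWithout.of_outClosedOn (htopo : ∀ a b, E a b → ord a < ord b)
    (hinj : Injective ord) (hout : OutClosedOn E ord s u) (hsu : ord s < ord u)
    (h : ReachWithout E t s v) (hv : ord u ≤ ord v) : ReachWithout E t u v := by
  have path : ∀ x, ReflTransGen (fun a b => E a b ∧ b ≠ t) s x →
      ord x < ord u ∨ ReflTransGen (fun a b => E a b ∧ b ≠ t) u x := by
    intro x hx
    induction hx with
    | refl => exact Or.inl hsu
    | tail hsx hxy ih =>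
      rcases ih with hxu | hux
      · have hsx' := ord_le_of_reflTransGen htopo (ReflTransGen.mono (fun _ _ h => h.1) _ _ hsx)
        rcases (hout _ _ hsx' hxu hxy.1).lt_or_eq with hyu | hyu
        · exact Or.inl hyu
        · exact Or.inr (hinj hyu ▸ .refl)
      · exact Or.inr (hux.tail hxy)
  rcases h with rfl | ⟨w, hw, hwv⟩
  · exact absurd hv hsu.not_ge
  · rcases path w hw with hwu | huw
    · have hsw := ord_le_of_reflTransGen htopo (ReflTransGen.mono (fun _ _ h => h.1) _ _ hw)
      exact Or.inl (hinj (le_antisymm hv (hout _ _ hsw hwu hwv)))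
    · exact Or.inr ⟨w, huw, hwv⟩

theorem outClosedOn_of_reachWithout_iff
    (hI : ∀ v, ReachWithout E t s v ↔ ord s ≤ ord v ∧ ord v ≤ ord t) :
    OutClosedOn E ord s t := fun a b hsa hat hab =>
  ((hI b).1 (((hI a).2 ⟨hsa, hat.le⟩).tail_of_ne (ne_of_apply_ne ord hat.ne) hab)).2

theorem inClosedOn_of_reachWithout_iff
    (hM : ∀ v, ReachWithout E t s v ↔ CoReachWithout E s v t)
    (hI : ∀ v, ReachWithout E t s v ↔ ord s ≤ ord v ∧ ord v ≤ ord t) :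
    InClosedOn E ord s t := fun a b hsb hbt hab =>
  ((hI a).1 ((hM a).2 (((hM b).1 ((hI b).2 ⟨hsb.le, hbt⟩)).head_of_ne
    (ne_of_apply_ne ord hsb.ne') hab))).1

theorem InClosedOn.of_outClosedOn {e e' : V} (hin : InClosedOn E ord s e)
    (hout : OutClosedOn E ord s e') (hse' : ord s < ord e') : InClosedOn E ord e' e :=
  fun a b he'b hbe hab => by
    have hsa := hin a b (hse'.trans he'b) hbe hab
    by_contra! hae'
    exact (hout a b hsa hae' hab).not_gt he'b

end TopologicalOrder

theorem nested_superbubble_core_general {V : Type*} (E : V → V → Prop)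
    (ordD : V → ℕ) (hinj : Function.Injective ordD)
    (htopo : ∀ a b, E a b → ordD a < ordD b)
    (hInterval : ∀ a b : V, SBCore E a b →
      {v : V | ReachWithout E b a v} = {v : V | ordD a ≤ ordD v ∧ ordD v ≤ ordD b})
    (s e e' : V)
    (h1 : SBCore E s e) (h2 : SBCore E s e')
    (ho1 : ordD s < ordD e') (ho2 : ordD e' < ordD e) :
    SBCore E e' e := by
  have hI := Set.ext_iff.1 (hInterval s e h1)
  have hM := h1.2.2.1
  have hout' := outClosedOn_of_reachWithout_iff (Set.ext_iff.1 (hInterval s e' h2))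
  have hout : OutClosedOn E ordD e' e := fun a b he'a =>
    outClosedOn_of_reachWithout_iff hI a b (ho1.le.trans he'a)
  have hin : InClosedOn E ordD e' e :=
    (inClosedOn_of_reachWithout_iff hM hI).of_outClosedOn hout' ho1
  have hreach : ∀ v, ReachWithout E e e' v ↔ ordD e' ≤ ordD v ∧ ordD v ≤ ordD e := fun v =>
    ⟨ReachWithout.ord_mem htopo hinj hout ho2, fun hv =>
      ((hI v).2 ⟨ho1.le.trans hv.1, hv.2⟩).of_outClosedOn htopo hinj hout' ho1 hv.1⟩
  have hcoreach : ∀ v, CoReachWithout E e' v e ↔ ordD e' ≤ ordD v ∧ ordD v ≤ ordD e := fun v =>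
    ⟨CoReachWithout.ord_mem htopo hinj hin ho2, fun hv => coReachWithout_of_reflTransGen htopo
      ((hM v).1 ((hI v).2 ⟨ho1.le.trans hv.1, hv.2⟩)).reflTransGen hv.1⟩
  have hne : e' ≠ e := ne_of_apply_ne ordD ho2.ne
  refine ⟨hne, ?_, fun v => (hreach v).trans (hcoreach v).symm, acyclicOn_of_ord htopo _⟩
  exact (reflTransGen_iff_eq_or_transGen.1
    ((hcoreach e').2 ⟨le_rfl, ho2.le⟩).reflTransGen).resolve_left hne.symm

/-- If ⟨s, e⟩ and ⟨s, e'⟩ both satisfy the reachability, matching and acyclicity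
conditions of a superbubble, with ordD s < ordD e' < ordD e, in a single-source
single-sink DAG whose topological ordering has the interval property (the vertex set
of any such pair is exactly the order interval between its endpoints), then ⟨e', e⟩
also satisfies the reachability, matching and acyclicity conditions. -/
theorem nested_superbubble_core {V : Type*} [Fintype V] (E : V → V → Prop)
    (hA : Acyclic E)
    (hSource : ∃! r : V, ∀ u, ¬ E u r)
    (hSink : ∃! q : V, ∀ u, ¬ E q u)
    (ordD : V → ℕ) (hinj : Function.Injective ordD)
    (htopo : ∀ a b, E a b → ordD a < ordD b)
    (hInterval : ∀ a b : V, SBCore E a b →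
      {v : V | ReachWithout E b a v} = {v : V | ordD a ≤ ordD v ∧ ordD v ≤ ordD b})
    (s e e' : V)
    (h1 : SBCore E s e) (h2 : SBCore E s e')
    (ho1 : ordD s < ordD e') (ho2 : ordD e' < ordD e) :
    SBCore E e' e :=
  nested_superbubble_core_general E ordD hinj htopo hInterval s e e' h1 h2 ho1 ho2
end
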